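/- In the N-agent system on finite spaces X, U where the transition kernel P(x,u,μ) does not depend on the action distribution, with agents sampling actions independently via π_t(x_t^i, μ_t^N) and next states independently via P(x_t^i, u_t^i, μ_t^N), the empirical next-state distribution μ_{t+1}^N satisfies E|μ_{t+1}^N − P^MF(μ_t^N, π_t)|₁ ≤ 2√(|X|)/√N, where P^MF(μ,π)(y) = Σ_x Σ_u P(x,u,μ)(y) π(x,μ)(u) μ(x). -/

import Mathlib

open Finset

def IsPmf {X : Type*} [Fintype X] (μ : X → ℝ) : Prop :=
  (∀ x, 0 ≤ μ x) ∧ ∑ x, μ x = 1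

noncomputable def l1 {X : Type*} [Fintype X] (f : X → ℝ) : ℝ := ∑ x, |f x|

/-- Empirical distribution of a configuration of `N` agents. -/
noncomputable def emp {X : Type*} [Fintype X] [DecidableEq X] {N : ℕ}
    (s : Fin N → X) : X → ℝ :=
  fun x => (∑ i, if s i = x then (1 : ℝ) else 0) / N

/-- Mean-field state update when the transition kernel does not depend on the
action distribution. -/
noncomputable def PMFind {X U : Type*} [Fintype X] [Fintype U]
    (P : X → U → (X → ℝ) → X → ℝ)
    (μ : X → ℝ) (π : X → (X → ℝ) → U → ℝ) : X → ℝ :=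
  fun y => ∑ x, ∑ u, P x u μ y * π x μ u * μ x

/-! Given the joint state `x`, agent `i` first samples an action and then a next state, so the
next states are independent with laws `Q i = ∑ u, π (x i) μ u • P (x i) u μ`, where `μ = emp x`,
and `PMFind P μ π` is exactly the average of the `Q i`. For each `y`, `N • emp s' y` is then a
sum of independent Bernoulli variables, whose variance is at most `∑ i, Q i y`. Cauchy–Schwarz
in the expectation and then in the sum over `y` gives `E ‖emp s' - PMFind P μ π‖₁ ≤ √|X| / √N`. -/

lemma IsPmf.bind {U X : Type*} [Fintype U] [Fintype X] {p : U → ℝ} {K : U → X → ℝ}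
    (hp : IsPmf p) (hK : ∀ u, IsPmf (K u)) : IsPmf fun y => ∑ u, p u * K u y := by
  refine ⟨fun y => sum_nonneg fun u _ => mul_nonneg (hp.1 u) ((hK u).1 y), ?_⟩
  simp_rw [sum_comm (γ := X), ← mul_sum, (hK _).2, mul_one, hp.2]

section ProductLaw

variable {ι α : Type*} [Fintype ι] [DecidableEq ι] [Fintype α]

-- `∑ s, (∏ k, Q k (s k)) * F s` is the expectation of `F` when the coordinates `s k` are
-- independent with laws `Q k`.

lemma sum_prod_mul_prod (Q F : ι → α → ℝ) :
    ∑ s : ι → α, (∏ k, Q k (s k)) * ∏ k, F k (s k) = ∏ k, ∑ a, Q k a * F k a := by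
  simp_rw [← prod_mul_distrib, Fintype.prod_sum]

lemma IsPmf.pi {Q : ι → α → ℝ} (hQ : ∀ i, IsPmf (Q i)) : IsPmf fun s : ι → α => ∏ k, Q k (s k) :=
  ⟨fun s => prod_nonneg fun k _ => (hQ k).1 _, by
    simpa [(hQ _).2] using sum_prod_mul_prod Q fun _ _ => 1⟩

variable {Q : ι → α → ℝ}

lemma sum_prod_mul_apply (hQ : ∀ i, ∑ a, Q i a = 1) (i : ι) (f : α → ℝ) :
    ∑ s : ι → α, (∏ k, Q k (s k)) * f (s i) = ∑ a, Q i a * f a := by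
  have := sum_prod_mul_prod Q fun k a => if k = i then f a else 1
  rw [prod_eq_single i (fun k _ hk => by simp [hk, hQ k]) (by simp)] at this
  simpa using this

lemma sum_prod_mul_apply_mul_apply (hQ : ∀ i, ∑ a, Q i a = 1) {i j : ι} (hij : i ≠ j)
    (f g : α → ℝ) :
    ∑ s : ι → α, (∏ k, Q k (s k)) * (f (s i) * g (s j))
      = (∑ a, Q i a * f a) * ∑ a, Q j a * g a := by
  have := sum_prod_mul_prod Q fun k a => (if k = i then f a else 1) * (if k = j then g a else 1)
  rw [prod_eq_mul_of_mem i j (mem_univ i) (mem_univ j) hij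
    (fun k _ hk => by simp [hk.1, hk.2, hQ k])] at this
  simpa only [prod_mul_distrib, prod_ite_eq', mem_univ, if_true, hij, hij.symm, if_false,
    mul_one, one_mul] using this

lemma sum_prod_mul_sum_sq (hQ : ∀ i, ∑ a, Q i a = 1) (z : ι → α → ℝ)
    (hz : ∀ i, ∑ a, Q i a * z i a = 0) :
    ∑ s : ι → α, (∏ k, Q k (s k)) * (∑ i, z i (s i)) ^ 2 = ∑ i, ∑ a, Q i a * z i a ^ 2 := by
  simp_rw [sq, sum_mul_sum, mul_sum]
  rw [sum_comm]
  refine sum_congr rfl fun i _ => ?_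
  rw [sum_comm, sum_eq_single i]
  · exact sum_prod_mul_apply hQ i fun a => z i a * z i a
  · intro j _ hji
    rw [sum_prod_mul_apply_mul_apply hQ hji.symm, hz, zero_mul]
  · simp

end ProductLaw

lemma sum_mul_abs_le_sqrt_sum_mul_sq {S : Type*} [Fintype S] {w : S → ℝ} (hw : IsPmf w)
    (g : S → ℝ) : ∑ s, w s * |g s| ≤ √(∑ s, w s * g s ^ 2) := by
  have hwg : ∀ s, 0 ≤ w s * g s ^ 2 := fun s => mul_nonneg (hw.1 s) (sq_nonneg _)
  calc ∑ s, w s * |g s| = ∑ s, √(w s) * √(w s * g s ^ 2) := by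
        refine sum_congr rfl fun s _ => ?_
        rw [Real.sqrt_mul (hw.1 s), Real.sqrt_sq_eq_abs, ← mul_assoc, Real.mul_self_sqrt (hw.1 s)]
    _ ≤ √(∑ s, w s) * √(∑ s, w s * g s ^ 2) := Real.sum_sqrt_mul_sqrt_le _ hw.1 hwg
    _ = √(∑ s, w s * g s ^ 2) := by rw [hw.2, Real.sqrt_one, one_mul]

lemma sum_sqrt_le_sqrt_card_mul_sqrt_sum {S : Type*} [Fintype S] {v : S → ℝ}
    (hv : ∀ s, 0 ≤ v s) : ∑ s, √(v s) ≤ √(Fintype.card S) * √(∑ s, v s) := by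
  simpa using Real.sum_sqrt_mul_sqrt_le univ (fun _ => zero_le_one) hv

section Empirical

variable {X : Type*} [Fintype X] [DecidableEq X] {N : ℕ}

lemma sum_mul_emp (s : Fin N → X) (f : X → ℝ) : ∑ x, f x * emp s x = (∑ i, f (s i)) / N := by
  simp_rw [emp, mul_div_assoc', ← sum_div, mul_sum, mul_ite, mul_one, mul_zero]
  rw [sum_comm]
  simp

lemma isPmf_emp (hN : 0 < N) (s : Fin N → X) : IsPmf (emp s) := by
  refine ⟨fun x => div_nonneg (sum_nonneg fun i _ => by split_ifs <;> norm_num) N.cast_nonneg, ?_⟩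
  simpa [hN.ne'] using sum_mul_emp s fun _ => 1

lemma PMFind_emp {U : Type*} [Fintype U] (P : X → U → (X → ℝ) → X → ℝ)
    (π : X → (X → ℝ) → U → ℝ) (x : Fin N → X) (y : X) :
    PMFind P (emp x) π y = (∑ i, ∑ u, π (x i) (emp x) u * P (x i) u (emp x) y) / N := by
  simp_rw [PMFind, ← sum_mul, sum_mul_emp, mul_comm]

variable {Q : Fin N → X → ℝ}

lemma emp_sub_sum_div_eq (s : Fin N → X) (y : X) :
    emp s y - (∑ i, Q i y) / N = (∑ i, ((if s i = y then 1 else 0) - Q i y)) / N := by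
  rw [emp, div_sub_div_same, sum_sub_distrib]

lemma sum_prod_mul_emp_sub_sq_le (hQ : ∀ i, IsPmf (Q i)) (y : X) :
    ∑ s : Fin N → X, (∏ k, Q k (s k)) * (emp s y - (∑ i, Q i y) / N) ^ 2
      ≤ (∑ i, Q i y) / N ^ 2 := by
  have hz : ∀ i, ∑ a, Q i a * ((if a = y then 1 else 0) - Q i y) = 0 := fun i => by
    simp [mul_sub, sum_sub_distrib, ← sum_mul, (hQ i).2]
  have hvar : ∀ i, ∑ a, Q i a * ((if a = y then 1 else 0) - Q i y) ^ 2 = Q i y * (1 - Q i y) :=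
    fun i => by
      have hpt : ∀ a, Q i a * ((if a = y then 1 else 0) - Q i y) ^ 2
          = (if a = y then Q i a else 0) * (1 - 2 * Q i y) + Q i y ^ 2 * Q i a := fun a => by
        split_ifs <;> ring
      rw [sum_congr rfl fun a _ => hpt a, sum_add_distrib, ← sum_mul, ← mul_sum, sum_ite_eq',
        if_pos (mem_univ y), (hQ i).2]
      ring
  simp_rw [emp_sub_sum_div_eq, div_pow, mul_div_assoc', ← sum_div,
    sum_prod_mul_sum_sq (fun i => (hQ i).2) _ hz, hvar]
  gcongr with i
  nlinarith [(hQ i).1 y]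

lemma sum_prod_mul_l1_emp_sub_le (hQ : ∀ i, IsPmf (Q i)) :
    ∑ s : Fin N → X, (∏ k, Q k (s k)) * l1 (fun y => emp s y - (∑ i, Q i y) / N)
      ≤ √(Fintype.card X) / √N := by
  have hQy : ∀ y, 0 ≤ (∑ i, Q i y) / (N : ℝ) ^ 2 := fun y =>
    div_nonneg (sum_nonneg fun i _ => (hQ i).1 y) (sq_nonneg _)
  calc ∑ s : Fin N → X, (∏ k, Q k (s k)) * l1 (fun y => emp s y - (∑ i, Q i y) / N)
      = ∑ y, ∑ s : Fin N → X, (∏ k, Q k (s k)) * |emp s y - (∑ i, Q i y) / N| := by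
        simp_rw [l1, mul_sum]
        exact sum_comm
    _ ≤ ∑ y, √((∑ i, Q i y) / (N : ℝ) ^ 2) := sum_le_sum fun y _ =>
        (sum_mul_abs_le_sqrt_sum_mul_sq (IsPmf.pi hQ) _).trans
          (Real.sqrt_le_sqrt (sum_prod_mul_emp_sub_sq_le hQ y))
    _ ≤ √(Fintype.card X) * √(∑ y, (∑ i, Q i y) / (N : ℝ) ^ 2) :=
        sum_sqrt_le_sqrt_card_mul_sqrt_sum hQy
    _ = √(Fintype.card X) / √N := by
        simp only [← sum_div, sum_comm (γ := X), (hQ _).2, sum_const, card_univ, Fintype.card_fin,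
          nsmul_eq_mul, mul_one]
        rw [sq, div_self_mul_self', Real.sqrt_inv, div_eq_mul_inv]

end Empirical

theorem empirical_state_update_bound_action_independent_general
    {X U : Type*} [Fintype X] [Fintype U] [DecidableEq X]
    (N : ℕ) (hN : 0 < N)
    (P : X → U → (X → ℝ) → X → ℝ)
    (hP : ∀ x u μ, IsPmf μ → IsPmf (P x u μ))
    (π : X → (X → ℝ) → U → ℝ)
    (hπ : ∀ x μ, IsPmf μ → IsPmf (π x μ))
    (x : Fin N → X) :
    ∑ a : Fin N → U, ∑ s' : Fin N → X,
        ((∏ i, π (x i) (emp x) (a i)) * ∏ i, P (x i) (a i) (emp x) (s' i)) *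
          l1 (fun y => emp s' y - PMFind P (emp x) π y)
      ≤ 2 * Real.sqrt (Fintype.card X) / Real.sqrt N := by
  have hμ := isPmf_emp hN x
  let Q : Fin N → X → ℝ := fun i y => ∑ u, π (x i) (emp x) u * P (x i) u (emp x) y
  have hQ : ∀ i, IsPmf (Q i) := fun i => (hπ _ _ hμ).bind fun u => hP _ u _ hμ
  have hlaw : ∀ s' : Fin N → X,
      ∑ a : Fin N → U, (∏ i, π (x i) (emp x) (a i)) * ∏ i, P (x i) (a i) (emp x) (s' i)
        = ∏ i, Q i (s' i) :=
    fun s' => sum_prod_mul_prod (fun i u => π (x i) (emp x) u) fun i u => P (x i) u (emp x) (s' i)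
  calc _ = ∑ s' : Fin N → X, (∏ i, Q i (s' i)) * l1 (fun y => emp s' y - (∑ i, Q i y) / N) := by
          rw [sum_comm]
          simp_rw [← sum_mul, hlaw, PMFind_emp]
          rfl
    _ ≤ √(Fintype.card X) / √N := sum_prod_mul_l1_emp_sub_le hQ
    _ ≤ 2 * √(Fintype.card X) / √N := by
          rw [mul_div_assoc]
          linarith [div_nonneg (Real.sqrt_nonneg (Fintype.card X)) (Real.sqrt_nonneg N)]

/-- Lemma 8: one-step propagation bound when the transition kernel does not depend on the
action distribution.  Conditioned on the joint state `x`, agents sample actions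
independently via `π` and next states independently via `P`; the expected L1 distance
between the next empirical state distribution and `P^MF(emp x, π)` is at most `2√|X|/√N`.
The expectation is written out as a sum over joint actions and joint next states weighted
by the product law.  No Lipschitz assumption on `P` is needed. -/
theorem empirical_state_update_bound_action_independent
    {X U : Type*} [Fintype X] [Fintype U] [DecidableEq X] [DecidableEq U]
    (N : ℕ) (hN : 0 < N)
    (P : X → U → (X → ℝ) → X → ℝ)
    (hP : ∀ x u μ, IsPmf μ → IsPmf (P x u μ))
    (π : X → (X → ℝ) → U → ℝ)
    (hπ : ∀ x μ, IsPmf μ → IsPmf (π x μ))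
    (x : Fin N → X) :
    ∑ a : Fin N → U, ∑ s' : Fin N → X,
        ((∏ i, π (x i) (emp x) (a i)) * ∏ i, P (x i) (a i) (emp x) (s' i)) *
          l1 (fun y => emp s' y - PMFind P (emp x) π y)
      ≤ 2 * Real.sqrt (Fintype.card X) / Real.sqrt N :=
  empirical_state_update_bound_action_independent_general N hN P hP π hπ x
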